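/- Let Δt > 0, let u⁰, u¹ : ℝ³ → ℝ³ be twice continuously differentiable on an open neighborhood of the closed unit cube Ω = [0,1]³, let p : ℝ³ → ℝ be continuously differentiable there, and set ū := (u⁰ + u¹)/2. Suppose the ideal (Re = ∞, zero force) strong-form midpoint time-discrete equation holds at every point of Ω: (u¹ − u⁰)/Δt − ū × (curl ū) + ∇p = 0, that u⁰ × n = 0 and u¹ × n = 0 on ∂Ω, and that p = 0 at every point of ∂Ω. Then the fluid helicity is exactly conserved: ∫_Ω u¹ · (curl u¹) dx = ∫_Ω u⁰ · (curl u⁰) dx. -/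

import Mathlib

/-!
Write `w = u¹ - u⁰` and `ū = (u⁰ + u¹) / 2`. Expanding around the midpoint gives the pointwise
identity `u¹ · curl u¹ - u⁰ · curl u⁰ = ū · curl w + w · curl ū = div (w × ū) + 2 w · curl ū`.
The momentum equation says `w = Δt (ū × curl ū - ∇p)`, and `ū × curl ū ⊥ curl ū`, so
`w · curl ū = -Δt ∇p · curl ū = -Δt div (p curl ū)` because `div curl = 0`. Hence the change of
helicity density is the divergence of `F = w × ū - 2 Δt p curl ū`. On a face of the cube both `w`
and `ū` are normal to the face, so `w × ū = 0` there, and `p = 0`; thus `F · n = 0` on `∂Ω` and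
the divergence theorem gives `∫_Ω div F = 0`.
-/

open MeasureTheory

noncomputable section

/-- Points of ℝ³, represented as functions `Fin 3 → ℝ`. -/
abbrev R3 : Type := Fin 3 → ℝ

/-- Partial derivative in the `i`-th coordinate direction. -/
noncomputable def pd (i : Fin 3) (f : R3 → ℝ) (x : R3) : ℝ :=
  fderiv ℝ f x (Pi.single i 1)

/-- Curl of a vector field on ℝ³. -/
noncomputable def vcurl (v : R3 → R3) (x : R3) : R3 :=
  ![pd 1 (fun y => v y 2) x - pd 2 (fun y => v y 1) x,
    pd 2 (fun y => v y 0) x - pd 0 (fun y => v y 2) x,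
    pd 0 (fun y => v y 1) x - pd 1 (fun y => v y 0) x]

/-- Divergence of a vector field on ℝ³. -/
noncomputable def vdiv (v : R3 → R3) (x : R3) : ℝ :=
  pd 0 (fun y => v y 0) x + pd 1 (fun y => v y 1) x + pd 2 (fun y => v y 2) x

/-- Gradient of a scalar field on ℝ³. -/
noncomputable def vgrad (f : R3 → ℝ) (x : R3) : R3 := fun i => pd i f x

/-- Euclidean dot product on ℝ³. -/
def dot3 (a b : R3) : ℝ := a 0 * b 0 + a 1 * b 1 + a 2 * b 2

/-- Cross product on ℝ³. -/
def cross3 (a b : R3) : R3 :=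
  ![a 1 * b 2 - a 2 * b 1, a 2 * b 0 - a 0 * b 2, a 0 * b 1 - a 1 * b 0]

/-- The closed unit cube Ω = [0,1]³. -/
def cube : Set R3 := Set.Icc 0 1

/-- `x` lies on one of the two faces of the cube orthogonal to direction `i`. -/
def onFace (x : R3) (i : Fin 3) : Prop := x i = 0 ∨ x i = 1

/-- `x` lies on the boundary ∂Ω of the cube. -/
def onBdry (x : R3) : Prop := x ∈ cube ∧ ∃ i : Fin 3, onFace x i

/-- Tangential boundary condition `v × n = 0` on ∂Ω: on each face of the cube
the two components of `v` tangential to that face vanish. -/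
def TangentialBC (v : R3 → R3) : Prop :=
  ∀ x ∈ cube, ∀ i : Fin 3, onFace x i → ∀ j : Fin 3, j ≠ i → v x j = 0

/-- Normal boundary condition `v · n = 0` on ∂Ω: on each face of the cube
the component of `v` normal to that face vanishes. -/
def NormalBC (v : R3 → R3) : Prop :=
  ∀ x ∈ cube, ∀ i : Fin 3, onFace x i → v x i = 0

section PartialDerivatives

variable {f g : R3 → ℝ} {x : R3}

theorem pd_sub (i : Fin 3) (hf : DifferentiableAt ℝ f x) (hg : DifferentiableAt ℝ g x) :
    pd i (fun y => f y - g y) x = pd i f x - pd i g x := by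
  simp [pd, fderiv_fun_sub hf hg]

theorem pd_mul (i : Fin 3) (hf : DifferentiableAt ℝ f x) (hg : DifferentiableAt ℝ g x) :
    pd i (fun y => f y * g y) x = pd i f x * g x + f x * pd i g x := by
  simp only [pd, fderiv_fun_mul hf hg, add_apply, smul_apply, smul_eq_mul]
  ring

theorem pd_apply_eq_fderiv {v : R3 → R3} (hv : DifferentiableAt ℝ v x) (i k : Fin 3) :
    pd i (fun y => v y k) x = fderiv ℝ v x (Pi.single i 1) k := by
  rw [pd, fderiv_pi (differentiableAt_pi.1 hv)]
  rfl

theorem ContDiffAt.pd {m n : WithTop ℕ∞} (hf : ContDiffAt ℝ n f x) (hmn : m + 1 ≤ n)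
    (j : Fin 3) : ContDiffAt ℝ m (pd j f) x := by
  exact (ContinuousLinearMap.apply ℝ ℝ (Pi.single j (1 : ℝ))).contDiff.contDiffAt.comp x
    (hf.fderiv_right hmn)

theorem pd_comm (hf : ContDiffAt ℝ 2 f x) (i j : Fin 3) :
    pd i (pd j f) x = pd j (pd i f) x := by
  have hD : DifferentiableAt ℝ (fderiv ℝ f) x :=
    (hf.fderiv_right (m := 1) (by norm_num)).differentiableAt one_ne_zero
  have hpd : ∀ a b : R3, fderiv ℝ (fun y => fderiv ℝ f y b) x a = fderiv ℝ (fderiv ℝ f) x a b :=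
    fun a b => by simp [fderiv_clm_apply hD (differentiableAt_const b)]
  exact (hpd _ _).trans ((hf.isSymmSndFDerivAt (by simp)) _ _ |>.trans (hpd _ _).symm)

end PartialDerivatives

section VectorCalculus

variable {a b v : R3 → R3} {q : R3 → ℝ} {x : R3}

theorem vcurl_eq_fderiv (hv : DifferentiableAt ℝ v x) :
    vcurl v x = ![fderiv ℝ v x (Pi.single 1 1) 2 - fderiv ℝ v x (Pi.single 2 1) 1,
      fderiv ℝ v x (Pi.single 2 1) 0 - fderiv ℝ v x (Pi.single 0 1) 2,
      fderiv ℝ v x (Pi.single 0 1) 1 - fderiv ℝ v x (Pi.single 1 1) 0] := by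
  simp only [vcurl, pd_apply_eq_fderiv hv]

theorem vdiv_eq_fderiv (hv : DifferentiableAt ℝ v x) :
    vdiv v x = ∑ i, fderiv ℝ v x (Pi.single i 1) i := by
  simp only [vdiv, pd_apply_eq_fderiv hv, Fin.sum_univ_three]

theorem vcurl_add (ha : DifferentiableAt ℝ a x) (hb : DifferentiableAt ℝ b x) :
    vcurl (fun y => a y + b y) x = vcurl a x + vcurl b x := by
  rw [vcurl_eq_fderiv (ha.fun_add hb), vcurl_eq_fderiv ha, vcurl_eq_fderiv hb,
    fderiv_fun_add ha hb]
  ext k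
  fin_cases k <;> simp only [add_apply, Pi.add_apply, Fin.isValue, Fin.zero_eta, Fin.mk_one,
    Fin.reduceFinMk, Matrix.cons_val_zero, Matrix.cons_val_one, Matrix.cons_val] <;> ring

theorem vcurl_sub (ha : DifferentiableAt ℝ a x) (hb : DifferentiableAt ℝ b x) :
    vcurl (fun y => a y - b y) x = vcurl a x - vcurl b x := by
  rw [vcurl_eq_fderiv (ha.fun_sub hb), vcurl_eq_fderiv ha, vcurl_eq_fderiv hb,
    fderiv_fun_sub ha hb]
  ext k
  fin_cases k <;> simp only [sub_apply, Pi.sub_apply, Fin.isValue, Fin.zero_eta, Fin.mk_one,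
    Fin.reduceFinMk, Matrix.cons_val_zero, Matrix.cons_val_one, Matrix.cons_val] <;> ring

theorem vcurl_const_smul (c : ℝ) (hv : DifferentiableAt ℝ v x) :
    vcurl (fun y => c • v y) x = c • vcurl v x := by
  rw [vcurl_eq_fderiv (hv.fun_const_smul c), vcurl_eq_fderiv hv, fderiv_fun_const_smul hv]
  ext k
  fin_cases k <;> simp only [smul_apply, Pi.smul_apply, smul_eq_mul, Fin.isValue, Fin.zero_eta,
    Fin.mk_one, Fin.reduceFinMk, Matrix.cons_val_zero, Matrix.cons_val_one, Matrix.cons_val]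
    <;> ring

theorem vdiv_sub (ha : DifferentiableAt ℝ a x) (hb : DifferentiableAt ℝ b x) :
    vdiv (fun y => a y - b y) x = vdiv a x - vdiv b x := by
  simp [vdiv_eq_fderiv (ha.fun_sub hb), vdiv_eq_fderiv ha, vdiv_eq_fderiv hb,
    fderiv_fun_sub ha hb]

theorem vdiv_const_smul (c : ℝ) (hv : DifferentiableAt ℝ v x) :
    vdiv (fun y => c • v y) x = c * vdiv v x := by
  simp [vdiv_eq_fderiv (hv.fun_const_smul c), vdiv_eq_fderiv hv, fderiv_fun_const_smul hv,
    Finset.mul_sum]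

theorem vdiv_smul (hq : DifferentiableAt ℝ q x) (hv : DifferentiableAt ℝ v x) :
    vdiv (fun y => q y • v y) x = dot3 (vgrad q x) (v x) + q x * vdiv v x := by
  have hv' := differentiableAt_pi.1 hv
  simp (disch := fun_prop) only [vdiv, Pi.smul_apply, smul_eq_mul, pd_mul]
  simp only [dot3, vgrad]
  ring

theorem vdiv_cross3 (ha : DifferentiableAt ℝ a x) (hb : DifferentiableAt ℝ b x) :
    vdiv (fun y => cross3 (a y) (b y)) x = dot3 (b x) (vcurl a x) - dot3 (a x) (vcurl b x) := by
  have ha' := differentiableAt_pi.1 ha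
  have hb' := differentiableAt_pi.1 hb
  simp (disch := fun_prop) only [vdiv, cross3, Matrix.cons_val_zero, Matrix.cons_val_one,
    Matrix.cons_val_two, Matrix.head_cons, Matrix.tail_cons, pd_sub, pd_mul]
  simp only [dot3, vcurl, Matrix.cons_val_zero, Matrix.cons_val_one,
    Matrix.cons_val_two, Matrix.head_cons, Matrix.tail_cons]
  ring

theorem vdiv_vcurl (hv : ContDiffAt ℝ 2 v x) : vdiv (vcurl v) x = 0 := by
  have hv' : ∀ k, ContDiffAt ℝ 2 (fun y => v y k) x := contDiffAt_pi.1 hv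
  have hd : ∀ j k, DifferentiableAt ℝ (pd j (fun y => v y k)) x :=
    fun j k => ((hv' k).pd (m := 1) (by norm_num) j).differentiableAt one_ne_zero
  simp only [vdiv, vcurl, Matrix.cons_val_zero, Matrix.cons_val_one,
    Matrix.cons_val_two, Matrix.head_cons, Matrix.tail_cons]
  rw [pd_sub _ (hd 1 2) (hd 2 1), pd_sub _ (hd 2 0) (hd 0 2), pd_sub _ (hd 0 1) (hd 1 0),
    pd_comm (hv' 2) 0 1, pd_comm (hv' 1) 0 2, pd_comm (hv' 0) 1 2]
  ring

end VectorCalculus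

section Regularity

variable {a b v : R3 → R3} {x : R3} {n : WithTop ℕ∞}

theorem ContDiffAt.dot3 (ha : ContDiffAt ℝ n a x) (hb : ContDiffAt ℝ n b x) :
    ContDiffAt ℝ n (fun y => dot3 (a y) (b y)) x := by
  have ha' := contDiffAt_pi.1 ha
  have hb' := contDiffAt_pi.1 hb
  simp only [_root_.dot3]
  fun_prop

theorem ContDiffAt.cross3 (ha : ContDiffAt ℝ n a x) (hb : ContDiffAt ℝ n b x) :
    ContDiffAt ℝ n (fun y => cross3 (a y) (b y)) x := by
  have ha' := contDiffAt_pi.1 ha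
  have hb' := contDiffAt_pi.1 hb
  refine contDiffAt_pi.2 fun k => ?_
  fin_cases k <;> simp only [_root_.cross3, Fin.isValue, Fin.zero_eta, Fin.mk_one,
    Fin.reduceFinMk, Matrix.cons_val_zero, Matrix.cons_val_one, Matrix.cons_val] <;> fun_prop

theorem ContDiffAt.vcurl {m : WithTop ℕ∞} (hv : ContDiffAt ℝ n v x) (hmn : m + 1 ≤ n) :
    ContDiffAt ℝ m (vcurl v) x := by
  have hpd : ∀ j k, ContDiffAt ℝ m (_root_.pd j (fun y => v y k)) x :=
    fun j k => (contDiffAt_pi.1 hv k).pd hmn j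
  refine contDiffAt_pi.2 fun k => ?_
  fin_cases k
  exacts [(hpd 1 2).sub (hpd 2 1), (hpd 2 0).sub (hpd 0 2), (hpd 0 1).sub (hpd 1 0)]

theorem integrableOn_cube_helicity (hv : ∀ x ∈ cube, ContDiffAt ℝ 2 v x) :
    IntegrableOn (fun x => dot3 (v x) (vcurl v x)) cube :=
  (continuousOn_of_forall_continuousAt fun x hx =>
    (((hv x hx).of_le one_le_two).dot3 ((hv x hx).vcurl le_rfl)).continuousAt)
    |>.integrableOn_compact isCompact_Icc

end Regularity

theorem integral_cube_vdiv_eq_zero {F : R3 → R3} (hF : ∀ x ∈ cube, ContDiffAt ℝ 1 F x)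
    (hbc : NormalBC F) : ∫ x in cube, vdiv F x = 0 := by
  have hflux : ∀ i c, c = 0 ∨ c = 1 →
      ∫ x in Set.Icc ((0 : R3) ∘ i.succAbove) ((1 : R3) ∘ i.succAbove),
        F (i.insertNth c x) i = 0 := by
    intro i c hc
    refine setIntegral_eq_zero_of_forall_eq_zero fun x hx => hbc _ ?_ i ?_
    · exact Fin.insertNth_mem_Icc.2 ⟨by rcases hc with rfl | rfl <;> simp, hx⟩
    · simpa [onFace] using hc
  have hinterior : (Set.univ.pi fun i => Set.Ioo ((0 : R3) i) ((1 : R3) i)) ⊆ cube :=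
    (Set.pi_mono fun _ _ => Set.Ioo_subset_Icc_self).trans (Set.pi_univ_Icc 0 1).subset
  have hdiv : ContinuousOn (fun x => ∑ i, fderiv ℝ F x (Pi.single i 1) i) cube :=
    continuousOn_finsetSum _ fun i _ => continuousOn_of_forall_continuousAt fun x hx =>
      (continuous_apply i).continuousAt.comp
        (((hF x hx).fderiv_right (m := 0) le_rfl).continuousAt.clm_apply continuousAt_const)
  rw [cube, setIntegral_congr_fun measurableSet_Icc fun x hx =>
      vdiv_eq_fderiv ((hF x hx).differentiableAt one_ne_zero),
    integral_divergence_of_hasFDerivAt_off_countable 0 1 zero_le_one F (fderiv ℝ F) ∅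
      Set.countable_empty
      (continuousOn_of_forall_continuousAt fun x hx => (hF x hx).continuousAt)
      (fun x hx => ((hF x (hinterior hx.1)).differentiableAt one_ne_zero).hasFDerivAt)
      (hdiv.integrableOn_compact isCompact_Icc)]
  refine Finset.sum_eq_zero fun i _ => ?_
  rw [hflux i ((1 : R3) i) (Or.inr rfl), hflux i ((0 : R3) i) (Or.inl rfl), sub_zero]

theorem cross3_eq_zero_of_forall_ne {a b : R3} {i : Fin 3} (ha : ∀ j ≠ i, a j = 0)
    (hb : ∀ j ≠ i, b j = 0) : cross3 a b = 0 := by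
  ext k
  fin_cases i <;> fin_cases k <;> simp [cross3, ha, hb]

section BoundaryConditions

variable {a b : R3 → R3}

theorem TangentialBC.add (ha : TangentialBC a) (hb : TangentialBC b) :
    TangentialBC (fun y => a y + b y) := fun x hx i hi j hj => by
  simp [ha x hx i hi j hj, hb x hx i hi j hj]

theorem TangentialBC.sub (ha : TangentialBC a) (hb : TangentialBC b) :
    TangentialBC (fun y => a y - b y) := fun x hx i hi j hj => by
  simp [ha x hx i hi j hj, hb x hx i hi j hj]

theorem TangentialBC.const_smul (c : ℝ) (ha : TangentialBC a) :
    TangentialBC (fun y => c • a y) := fun x hx i hi j hj => by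
  simp [ha x hx i hi j hj]

theorem TangentialBC.cross3_eq_zero (ha : TangentialBC a) (hb : TangentialBC b) {x : R3}
    (hx : onBdry x) : cross3 (a x) (b x) = 0 :=
  let ⟨hxc, _, hi⟩ := hx
  cross3_eq_zero_of_forall_ne (ha x hxc _ hi) (hb x hxc _ hi)

end BoundaryConditions

theorem dot3_cross3_self (a b : R3) : dot3 (cross3 a b) b = 0 := by
  simp only [dot3, cross3, Fin.isValue, Matrix.cons_val_zero, Matrix.cons_val_one,
    Matrix.cons_val]
  ring

theorem dot3_sub_dot3_eq_midpoint (a₀ a₁ c₀ c₁ : R3) :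
    dot3 a₁ c₁ - dot3 a₀ c₀ =
      dot3 ((2 : ℝ)⁻¹ • (a₀ + a₁)) (c₁ - c₀) + dot3 (a₁ - a₀) ((2 : ℝ)⁻¹ • (c₀ + c₁)) := by
  simp only [dot3, Pi.smul_apply, Pi.add_apply, Pi.sub_apply, smul_eq_mul]
  ring

section Helicity

variable {u₀ u₁ : R3 → R3} {x : R3}

theorem helicity_sub_eq (h₀ : DifferentiableAt ℝ u₀ x) (h₁ : DifferentiableAt ℝ u₁ x) :
    dot3 (u₁ x) (vcurl u₁ x) - dot3 (u₀ x) (vcurl u₀ x) =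
      vdiv (fun y => cross3 (u₁ y - u₀ y) ((2 : ℝ)⁻¹ • (u₀ y + u₁ y))) x +
        2 * dot3 (u₁ x - u₀ x) (vcurl (fun y => (2 : ℝ)⁻¹ • (u₀ y + u₁ y)) x) := by
  rw [vdiv_cross3 (h₁.fun_sub h₀) ((h₀.fun_add h₁).fun_const_smul _), vcurl_sub h₁ h₀,
    vcurl_const_smul _ (h₀.fun_add h₁), vcurl_add h₀ h₁, dot3_sub_dot3_eq_midpoint]
  ring

theorem dot3_vcurl_eq_of_momentum {Δt : ℝ} (hΔt : Δt ≠ 0) {w : R3} {v : R3 → R3}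
    {p : R3 → ℝ} (hv : ContDiffAt ℝ 2 v x) (hp : DifferentiableAt ℝ p x)
    (hmom : Δt⁻¹ • w - cross3 (v x) (vcurl v x) + vgrad p x = 0) :
    dot3 w (vcurl v x) = -Δt * vdiv (fun y => p y • vcurl v y) x := by
  have hw : w = Δt • (cross3 (v x) (vcurl v x) - vgrad p x) := by
    rw [← smul_right_injective R3 (inv_ne_zero hΔt) |>.eq_iff, inv_smul_smul₀ hΔt]
    linear_combination (norm := module) hmom
  calc dot3 w (vcurl v x)
      = Δt * (dot3 (cross3 (v x) (vcurl v x)) (vcurl v x) - dot3 (vgrad p x) (vcurl v x)) := by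
        simp only [hw, dot3, Pi.smul_apply, Pi.sub_apply, smul_eq_mul]
        ring
    _ = -Δt * (dot3 (vgrad p x) (vcurl v x) + p x * vdiv (vcurl v) x) := by
        rw [dot3_cross3_self, vdiv_vcurl hv]
        ring
    _ = -Δt * vdiv (fun y => p y • vcurl v y) x := by
        rw [vdiv_smul hp ((hv.vcurl (m := 1) (by norm_num)).differentiableAt one_ne_zero)]

theorem helicity_sub_eq_vdiv_of_momentum {Δt : ℝ} (hΔt : Δt ≠ 0) {p : R3 → ℝ}
    (h₀ : ContDiffAt ℝ 2 u₀ x) (h₁ : ContDiffAt ℝ 2 u₁ x) (hp : DifferentiableAt ℝ p x)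
    (hmom : Δt⁻¹ • (u₁ x - u₀ x) - cross3 ((2 : ℝ)⁻¹ • (u₀ x + u₁ x))
      (vcurl (fun y => (2 : ℝ)⁻¹ • (u₀ y + u₁ y)) x) + vgrad p x = 0) :
    dot3 (u₁ x) (vcurl u₁ x) - dot3 (u₀ x) (vcurl u₀ x) =
      vdiv (fun y => cross3 (u₁ y - u₀ y) ((2 : ℝ)⁻¹ • (u₀ y + u₁ y)) -
        (2 * Δt) • (p y • vcurl (fun y => (2 : ℝ)⁻¹ • (u₀ y + u₁ y)) y)) x := by
  have hmid : ContDiffAt ℝ 2 (fun y => (2 : ℝ)⁻¹ • (u₀ y + u₁ y)) x := (h₀.add h₁).const_smul _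
  have hflux : DifferentiableAt ℝ
      (fun y => p y • vcurl (fun y => (2 : ℝ)⁻¹ • (u₀ y + u₁ y)) y) x :=
    hp.smul ((hmid.vcurl (m := 1) (by norm_num)).differentiableAt one_ne_zero)
  rw [vdiv_sub (((h₁.sub h₀).cross3 hmid).differentiableAt two_ne_zero)
      (hflux.fun_const_smul _), vdiv_const_smul _ hflux,
    helicity_sub_eq (h₀.differentiableAt two_ne_zero) (h₁.differentiableAt two_ne_zero),
    dot3_vcurl_eq_of_momentum hΔt hmid hp hmom]
  ring

end Helicity

/-- Exact helicity conservation for the ideal (Re = ∞, zero force) strong-form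
midpoint time-discrete equation with exact integration:
∫_Ω u¹ · (curl u¹) dx = ∫_Ω u⁰ · (curl u⁰) dx. -/
theorem discrete_helicity_conservation_ideal (Δt : ℝ) (hΔt : 0 < Δt)
    (u0 u1 ub : R3 → R3) (p : R3 → ℝ) (U : Set R3)
    (hU : IsOpen U) (hcube : cube ⊆ U)
    (hu0 : ContDiffOn ℝ 2 u0 U) (hu1 : ContDiffOn ℝ 2 u1 U)
    (hp : ContDiffOn ℝ 1 p U)
    (hub : ub = fun x => (2 : ℝ)⁻¹ • (u0 x + u1 x))
    (hmom : ∀ x ∈ cube,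
      Δt⁻¹ • (u1 x - u0 x) - cross3 (ub x) (vcurl ub x) + vgrad p x = 0)
    (hbc0 : TangentialBC u0) (hbc1 : TangentialBC u1)
    (hbcp : ∀ x : R3, onBdry x → p x = 0) :
    ∫ x in cube, dot3 (u1 x) (vcurl u1 x)
      = ∫ x in cube, dot3 (u0 x) (vcurl u0 x) := by
  subst hub
  have hu0' : ∀ x ∈ cube, ContDiffAt ℝ 2 u0 x := fun x hx =>
    hu0.contDiffAt (hU.mem_nhds (hcube hx))
  have hu1' : ∀ x ∈ cube, ContDiffAt ℝ 2 u1 x := fun x hx =>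
    hu1.contDiffAt (hU.mem_nhds (hcube hx))
  have hp' : ∀ x ∈ cube, ContDiffAt ℝ 1 p x := fun x hx =>
    hp.contDiffAt (hU.mem_nhds (hcube hx))
  set ub := fun y => (2 : ℝ)⁻¹ • (u0 y + u1 y)
  set F : R3 → R3 := fun y => cross3 (u1 y - u0 y) (ub y) - (2 * Δt) • (p y • vcurl ub y)
  have hF : ∀ x ∈ cube, ContDiffAt ℝ 1 F x := fun x hx =>
    have hub : ContDiffAt ℝ 2 ub x := ((hu0' x hx).add (hu1' x hx)).const_smul _
    (((hu1' x hx).sub (hu0' x hx)).cross3 hub).of_le one_le_two |>.sub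
      (((hp' x hx).smul (hub.vcurl le_rfl)).const_smul _)
  have hFbc : NormalBC F := fun x hx i hi => by
    have hcross : cross3 (u1 x - u0 x) (ub x) = 0 :=
      (hbc1.sub hbc0).cross3_eq_zero ((hbc0.add hbc1).const_smul _) ⟨hx, i, hi⟩
    simp [F, hcross, hbcp x ⟨hx, i, hi⟩]
  rw [← sub_eq_zero, ← integral_sub (integrableOn_cube_helicity hu1')
      (integrableOn_cube_helicity hu0'),
    setIntegral_congr_fun (s := cube) measurableSet_Icc fun x hx =>
      helicity_sub_eq_vdiv_of_momentum hΔt.ne' (hu0' x hx) (hu1' x hx)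
        ((hp' x hx).differentiableAt one_ne_zero) (hmom x hx)]
  exact integral_cube_vdiv_eq_zero hF hFbc
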